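/- Let X, Y, Z be finite-valued random variables with all conditional probabilities well-defined, satisfying Y ⫫ Z | X. If the stochastic matrix P_{X|Z} is invertible, then P_{Y|X} = P_{Y|Z} · P_{X|Z}⁻¹; i.e., P_{Y|X} is uniquely determined by the two pairwise conditionals P_{Y|Z} and P_{X|Z}. -/
import Mathlib


/-- For finite-valued (X,Y,Z) with Y ⫫ Z | X, the stochastic matrices satisfy
P_{Y|Z} = P_{Y|X} · P_{X|Z}; hence if P_{X|Z} is invertible,
P_{Y|X} = P_{Y|Z} · P_{X|Z}⁻¹ is determined by P_{Y|Z} and P_{X|Z}. -/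
theorem stochastic_matrix_factorization_mediator_X
    {A B C : Type*} [Fintype A] [Fintype B] [Fintype C] [DecidableEq A] [DecidableEq C]
    (p : A → B → C → ℝ) (hp0 : ∀ a b c, 0 ≤ p a b c)
    (hp1 : ∑ a, ∑ b, ∑ c, p a b c = 1)
    (hX : ∀ a, 0 < ∑ b, ∑ c, p a b c)
    (hZ : ∀ c, 0 < ∑ a, ∑ b, p a b c)
    (hci : ∀ a b c,
      p a b c * (∑ b', ∑ c', p a b' c')
        = (∑ c', p a b c') * (∑ b', p a b' c)) :
    ∀ Q : Matrix C A ℝ,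
      (Matrix.of fun (a : A) (c : C) => (∑ b, p a b c) / (∑ a', ∑ b, p a' b c)) * Q = 1 →
      Q * (Matrix.of fun (a : A) (c : C) => (∑ b, p a b c) / (∑ a', ∑ b, p a' b c)) = 1 →
      (Matrix.of fun (b : B) (a : A) => (∑ c, p a b c) / (∑ b', ∑ c, p a b' c))
        = (Matrix.of fun (b : B) (c : C) => (∑ a, p a b c) / (∑ a, ∑ b', p a b' c)) * Q := by
  intro Q hQ1 hQ2
  set S : Matrix A C ℝ := Matrix.of fun (a : A) (c : C) => (∑ b, p a b c) / (∑ a', ∑ b, p a' b c) with hS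
  set M : Matrix B A ℝ := Matrix.of fun (b : B) (a : A) => (∑ c, p a b c) / (∑ b', ∑ c, p a b' c) with hM
  set R : Matrix B C ℝ := Matrix.of fun (b : B) (c : C) => (∑ a, p a b c) / (∑ a, ∑ b', p a b' c) with hR
  have key : M * S = R := by
    ext b c
    simp only [Matrix.mul_apply, hM, hS, hR, Matrix.of_apply]
    have hden : ∀ a, (∑ b', ∑ c', p a b' c') ≠ 0 := fun a => (hX a).ne'
    have hdenZ : (∑ a, ∑ b', p a b' c) ≠ 0 := (hZ c).ne'
    rw [Finset.sum_div]
    apply Finset.sum_congr rfl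
    intro a _
    rw [div_mul_div_comm, ← hci a b c, mul_comm (∑ b', ∑ c', p a b' c') (∑ a', ∑ b', p a' b' c),
      ← mul_div_mul_right (p a b c) (∑ a', ∑ b', p a' b' c) (hden a), mul_comm]
  calc M = M * (S * Q) := by rw [hQ1, Matrix.mul_one]
    _ = (M * S) * Q := by rw [Matrix.mul_assoc]
    _ = R * Q := by rw [key]
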